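/- arXiv:2406.11528 — 5 statements merged into one kernel-verified Lean document; each statement's English description precedes it below -/
import Mathlib

section
/- For all x in [0,1], 1 - sqrt(1 - x + x * ln x) ≤ sqrt(x), where x * ln x is interpreted as 0 at x = 0. -/
theorem stmt_0 (x : ℝ) (hx : x ∈ Set.Icc (0:ℝ) 1) :
    1 - Real.sqrt (1 - x + x * Real.log x) ≤ Real.sqrt x := by
  obtain ⟨h0, h1⟩ := hx
  rcases eq_or_lt_of_le h0 with h | h
  · simp [← h]
  · have ht : 0 < Real.sqrt x := Real.sqrt_pos.2 h
    set t := Real.sqrt x with htdef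
    have hx2 : x = t ^ 2 := (Real.sq_sqrt h0).symm
    have hlog : Real.log x = 2 * Real.log t := by
      rw [hx2, Real.log_pow]; push_cast; ring
    have key : 1 - 1 / t ≤ Real.log t := by
      have := Real.log_le_sub_one_of_pos (show (0:ℝ) < 1/t by positivity)
      rw [Real.log_div one_ne_zero ht.ne', Real.log_one] at this
      linarith
    have key2 : t - 1 ≤ t * Real.log t := by
      have h2 := mul_le_mul_of_nonneg_left key ht.le
      have : t * (1 - 1/t) = t - 1 := by field_simp
      linarith
    have sq_ineq : (1 - t) ^ 2 ≤ 1 - x + x * Real.log x := by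
      rw [hlog, hx2]
      nlinarith [mul_le_mul_of_nonneg_left key2 ht.le]
    have hmain : 1 - t ≤ Real.sqrt (1 - x + x * Real.log x) := by
      rcases le_or_gt (1 - t) 0 with hle | hpos
      · exact hle.trans (Real.sqrt_nonneg _)
      · have := Real.sqrt_le_sqrt sq_ineq
        rwa [Real.sqrt_sq hpos.le] at this
    linarith
end

section
/- Let e₀ > 0, e₁ > 0 with e₀ < e₁, and suppose h(α) := e₀ · (−ln(1−α)) − e₁·α + c ≥ 0 for all α ∈ [0,1). Then sqrt(e₁) − sqrt(c) ≤ sqrt(e₀). -/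
/-! At `α = 1 - e₀/e₁`, where `h` is minimal, the hypothesis reads
`c ≥ e₁ - e₀ - e₀ log (e₁/e₀)`. Applying `log t ≤ t - 1` to `t = √(e₁/e₀)` bounds the logarithmic
term by `2√e₀√e₁ - 2e₀`, so `c ≥ (√e₁ - √e₀)²`. -/

open Real

lemma Real.log_le_two_mul_sqrt_sub_one {x : ℝ} (hx : 0 < x) : log x ≤ 2 * (√x - 1) := by
  have h := log_le_sub_one_of_pos (sqrt_pos.mpr hx)
  rw [log_sqrt hx.le] at h
  linarith

lemma Real.mul_log_div_le {a b : ℝ} (ha : 0 < a) (hb : 0 < b) :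
    a * log (b / a) ≤ 2 * (√a * √b - a) := by
  calc a * log (b / a) ≤ a * (2 * (√(b / a) - 1)) :=
        mul_le_mul_of_nonneg_left (log_le_two_mul_sqrt_sub_one (div_pos hb ha)) ha.le
    _ = 2 * (√a * √b - a) := by
        rw [sqrt_div' b ha.le]
        field_simp
        linear_combination -√b * mul_self_sqrt ha.le

lemma Real.sq_sqrt_sub_sqrt_le {a b : ℝ} (ha : 0 < a) (hb : 0 < b) :
    (√b - √a) ^ 2 ≤ b - a - a * log (b / a) := by
  have h := mul_log_div_le ha hb
  nlinarith [sq_sqrt ha.le, sq_sqrt hb.le]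

theorem stmt_2_general (e₀ e₁ c : ℝ) (he₀ : 0 < e₀) (hlt : e₀ < e₁)
    (hnn : ∀ α ∈ Set.Ico (0:ℝ) 1, 0 ≤ e₀ * (-Real.log (1 - α)) - e₁ * α + c) :
    Real.sqrt e₁ - Real.sqrt c ≤ Real.sqrt e₀ := by
  have he₁ : 0 < e₁ := he₀.trans hlt
  have hmin : 1 - e₀ / e₁ ∈ Set.Ico (0:ℝ) 1 :=
    ⟨sub_nonneg.mpr ((div_le_one he₁).mpr hlt.le), sub_lt_self _ (div_pos he₀ he₁)⟩
  have hval : e₀ * (-log (1 - (1 - e₀ / e₁))) - e₁ * (1 - e₀ / e₁) + c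
      = c - (e₁ - e₀ - e₀ * log (e₁ / e₀)) := by
    rw [sub_sub_cancel, ← log_inv, inv_div]
    field_simp
    ring
  have hsq : (√e₁ - √e₀) ^ 2 ≤ c := by
    have := hnn _ hmin
    linarith [sq_sqrt_sub_sqrt_le he₀ he₁]
  linarith [le_abs_self (√e₁ - √e₀), abs_le_sqrt hsq]

theorem stmt_2 (e₀ e₁ c : ℝ) (he₀ : 0 < e₀) (he₁ : 0 < e₁) (hlt : e₀ < e₁) (hc : 0 ≤ c)
    (hnn : ∀ α ∈ Set.Ico (0:ℝ) 1, 0 ≤ e₀ * (-Real.log (1 - α)) - e₁ * α + c) :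
    Real.sqrt e₁ - Real.sqrt c ≤ Real.sqrt e₀ :=
  stmt_2_general e₀ e₁ c he₀ hlt hnn
end

section
/- Suppose e : [0,1] → ℝ is continuously differentiable and c : [0,1] → ℝ satisfies, for all α, α′ ∈ [0,1], α·e(α) − c(α) ≥ α·e(α′) − c(α′). Then c is differentiable and c′(α) = α·e′(α) for all α ∈ (0,1), hence c(α) = c(0) + α·e(α) − ∫₀^α e(t) dt. -/
/-!
Comparing the incentive constraints at `α` and `α'` gives
`α (e α' - e α) ≤ c α' - c α ≤ α' (e α' - e α)`,
so `c α' - c α` differs from `α (e α' - e α)` by at most `(α' - α)(e α' - e α)`, which is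
`o(α' - α)` because `e` is continuous. Hence `c` has derivative `α e'(α)`, and
`c α - α e α + ∫₀^α e` has derivative zero, so it is constant.
-/

open Asymptotics Set Filter Topology

def IncentiveCompatible (s : Set ℝ) (e c : ℝ → ℝ) : Prop :=
  ∀ α ∈ s, ∀ α' ∈ s, α * e α - c α ≥ α * e α' - c α'

namespace IncentiveCompatible

variable {s : Set ℝ} {e c : ℝ → ℝ}

theorem mul_sub_le_sub (h : IncentiveCompatible s e c) {a x : ℝ} (ha : a ∈ s) (hx : x ∈ s) :
    a * (e x - e a) ≤ c x - c a := by
  linarith [h a ha x hx]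

theorem sub_le_mul_sub (h : IncentiveCompatible s e c) {a x : ℝ} (ha : a ∈ s) (hx : x ∈ s) :
    c x - c a ≤ x * (e x - e a) := by
  linarith [h x hx a ha]

theorem hasDerivWithinAt (h : IncentiveCompatible s e c) {a e' : ℝ} (ha : a ∈ s)
    (he : HasDerivWithinAt e e' s a) : HasDerivWithinAt c (a * e') s a := by
  set r : ℝ → ℝ := fun x => c x - c a - a * (e x - e a) with hr_def
  have hr_bound : r =O[𝓝[s] a] fun x => (x - a) * (e x - e a) := by
    refine IsBigO.of_bound 1 ?_
    filter_upwards [self_mem_nhdsWithin] with x hx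
    have hlow := h.mul_sub_le_sub ha hx
    have hhigh := h.sub_le_mul_sub ha hx
    rw [one_mul, Real.norm_eq_abs, Real.norm_eq_abs]
    exact abs_le_abs (by linarith) (by linarith)
  have he_cont : Tendsto (fun x => e x - e a) (𝓝[s] a) (𝓝 0) := by
    simpa using he.continuousWithinAt.tendsto.sub_const (e a)
  have hr_small : r =o[𝓝[s] a] fun x => x - a := by
    refine hr_bound.trans_isLittleO ?_
    simpa using (isBigO_refl (fun x => x - a) _).mul_isLittleO ((isLittleO_one_iff ℝ).2 he_cont)
  have hr_deriv : HasDerivWithinAt r 0 s a := by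
    rw [hasDerivWithinAt_iff_isLittleO]
    simpa [hr_def] using hr_small
  have hc_eq : c = fun x => a * e x + r x + (c a - a * e a) := by
    funext x
    simp only [hr_def]
    ring
  rw [hc_eq, ← add_zero (a * e')]
  exact ((he.const_mul a).add hr_deriv).add_const _

end IncentiveCompatible

theorem eq_add_mul_sub_integral_of_hasDerivWithinAt {a b : ℝ} {e c : ℝ → ℝ}
    (he : Differentiable ℝ e)
    (hc : ∀ x ∈ Icc a b, HasDerivWithinAt c (x * deriv e x) (Icc a b) x) :
    ∀ x ∈ Icc a b, c x = c a + (x * e x - a * e a) - ∫ t in a..x, e t := by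
  set g : ℝ → ℝ := fun x => c x - x * e x + ∫ t in a..x, e t with hg_def
  have hg : ∀ x ∈ Icc a b, HasDerivWithinAt g 0 (Icc a b) x := by
    intro x hx
    have hmul : HasDerivAt (fun y => y * e y) (1 * e x + x * deriv e x) x :=
      (hasDerivAt_id x).mul (he x).hasDerivAt
    have hint : HasDerivAt (fun y => ∫ t in a..y, e t) (e x) x :=
      intervalIntegral.integral_hasDerivAt_right (he.continuous.intervalIntegrable a x)
        (he.continuous.stronglyMeasurableAtFilter _ _) he.continuous.continuousAt
    have hsum := ((hc x hx).sub hmul.hasDerivWithinAt).add hint.hasDerivWithinAt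
    rwa [show x * deriv e x - (1 * e x + x * deriv e x) + e x = 0 by ring] at hsum
  have hg_const : ∀ x ∈ Icc a b, g x = g a :=
    constant_of_has_deriv_right_zero (fun x hx => (hg x hx).continuousWithinAt)
      fun x hx => (hg x (Ico_subset_Icc_self hx)).mono_of_mem_nhdsWithin
        (Icc_mem_nhdsGE_of_mem hx)
  intro x hx
  have := hg_const x hx
  simp only [hg_def, intervalIntegral.integral_same, add_zero] at this
  linarith

theorem stmt_8 (e c : ℝ → ℝ) (he : ContDiff ℝ 1 e)
    (hIC : ∀ α ∈ Set.Icc (0:ℝ) 1, ∀ α' ∈ Set.Icc (0:ℝ) 1,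
      α * e α - c α ≥ α * e α' - c α') :
    (∀ α ∈ Set.Ioo (0:ℝ) 1, HasDerivAt c (α * deriv e α) α) ∧
    (∀ α ∈ Set.Icc (0:ℝ) 1, c α = c 0 + α * e α - ∫ t in (0:ℝ)..α, e t) := by
  have hed : Differentiable ℝ e := he.differentiable one_ne_zero
  have hc : ∀ α ∈ Icc (0:ℝ) 1, HasDerivWithinAt c (α * deriv e α) (Icc 0 1) α :=
    fun α hα => IncentiveCompatible.hasDerivWithinAt hIC hα (hed α).hasDerivAt.hasDerivWithinAt
  refine ⟨fun α hα => (hc α (Ioo_subset_Icc_self hα)).hasDerivAt (Icc_mem_nhds hα.1 hα.2),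
    fun α hα => ?_⟩
  simpa using eq_add_mul_sub_integral_of_hasDerivWithinAt hed hc α hα
end

section
/- Let α* ∈ (0,1), u* > 0, e*(α) = u*/(−(1−α)·ln(1−α*)) on [0,1), and c*(α) = α·e*(α) − ∫₀^α e*(t) dt. Suppose u : [0,1] → ℝ satisfies u(α) ≤ (−ln(1−α))·u*/(−ln(1−α*)) for all α ∈ [0,1). If e*(α₀) ≥ x for some α₀ and x = e*(α₀), then α₀·x − c*(α₀) ≥ u(α₀). -/
/-!
With `x = e*(α₀)`, the quantity `α₀ x - c*(α₀)` is `∫₀^α₀ e*`, and since `e*(t)` is a constant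
multiple of `1 / (1 - t)` this integral equals the assumed upper bound on `u(α₀)`.
-/

open Real intervalIntegral

theorem integral_inv_one_sub {a b : ℝ} (ha : a < 1) (hb : b < 1) :
    ∫ t in a..b, (1 - t)⁻¹ = log ((1 - a) / (1 - b)) := by
  rw [integral_comp_sub_left (fun x : ℝ => x⁻¹)]
  refine integral_inv fun h => ?_
  rcases Set.mem_uIcc.mp h with h | h <;> linarith [h.1, h.2]

theorem stmt_11_general (αs us : ℝ)
    (es cs u : ℝ → ℝ) (hes : ∀ α, es α = us / (-(1 - α) * Real.log (1 - αs)))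
    (hcs : ∀ α, cs α = α * es α - ∫ t in (0:ℝ)..α, es t)
    (hu : ∀ α ∈ Set.Ico (0:ℝ) 1,
      u α ≤ (-Real.log (1 - α)) * us / (-Real.log (1 - αs)))
    (α₀ x : ℝ) (hα₀ : α₀ ∈ Set.Ico (0:ℝ) 1) (hx : x = es α₀) :
    α₀ * x - cs α₀ ≥ u α₀ := by
  have hes_fun : es = fun t => us / -log (1 - αs) * (1 - t)⁻¹ := by
    funext t
    rw [hes, neg_mul, div_neg, div_neg, div_mul_eq_div_div, div_eq_mul_inv _ (1 - t)]
    ring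
  calc u α₀ ≤ -log (1 - α₀) * us / -log (1 - αs) := hu α₀ hα₀
    _ = ∫ t in (0:ℝ)..α₀, es t := by
      rw [hes_fun, integral_const_mul, integral_inv_one_sub one_pos hα₀.2, sub_zero, one_div,
        log_inv]
      ring
    _ = α₀ * x - cs α₀ := by rw [hcs, hx]; ring

theorem stmt_11 (αs us : ℝ) (hαs : αs ∈ Set.Ioo (0:ℝ) 1) (hus : 0 < us)
    (es cs u : ℝ → ℝ) (hes : ∀ α, es α = us / (-(1 - α) * Real.log (1 - αs)))
    (hcs : ∀ α, cs α = α * es α - ∫ t in (0:ℝ)..α, es t)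
    (hu : ∀ α ∈ Set.Ico (0:ℝ) 1,
      u α ≤ (-Real.log (1 - α)) * us / (-Real.log (1 - αs)))
    (α₀ x : ℝ) (hα₀ : α₀ ∈ Set.Ico (0:ℝ) 1) (hge : es α₀ ≥ x) (hx : x = es α₀) :
    α₀ * x - cs α₀ ≥ u α₀ :=
  stmt_11_general αs us es cs u hes hcs hu α₀ x hα₀ hx
end

section
/- Let α : [0,1) → [0,1) be the inverse of φ(x) = x + (1−x)·ln(1−x). Then (1−α(y))/(1−√y)² → +∞ as y → 1⁻. -/
/-!
Put `t = 1 - α y`. The equation `φ (α y) = y` reads `1 - y = t (1 - log t)`, so `0 < t ≤ 1 - y` and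
`t → 0⁺` as `y → 1⁻`. Since `1 - √y ≤ 1 - y = t (1 - log t)`, the ratio is at least
`1 / (t (1 - log t)²)`, which tends to `+∞` because `√t log t → 0`.
-/

open Real Filter Set Topology

lemma tendsto_sqrt_mul_one_sub_log_nhdsGT_zero :
    Tendsto (fun t => √t * (1 - log t)) (𝓝[>] 0) (𝓝 0) := by
  have hsqrt : Tendsto (fun t : ℝ => √t) (𝓝[>] 0) (𝓝 0) :=
    (continuous_sqrt.tendsto' 0 0 sqrt_zero).mono_left nhdsWithin_le_nhds
  have hlog : Tendsto (fun t => log t * √t) (𝓝[>] 0) (𝓝 0) := by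
    simpa only [← sqrt_eq_rpow] using tendsto_log_mul_rpow_nhdsGT_zero one_half_pos
  simpa only [sub_zero, mul_sub, mul_one, mul_comm (log _)] using hsqrt.sub hlog

lemma tendsto_mul_one_sub_log_sq_nhdsGT_zero :
    Tendsto (fun t => t * (1 - log t) ^ 2) (𝓝[>] 0) (𝓝[>] 0) := by
  refine tendsto_nhdsWithin_iff.2 ⟨?_, ?_⟩
  · have hsq := tendsto_sqrt_mul_one_sub_log_nhdsGT_zero.pow 2
    rw [zero_pow two_ne_zero] at hsq
    refine hsq.congr' ?_
    filter_upwards [self_mem_nhdsWithin] with t ht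
    rw [mul_pow, sq_sqrt ht.le]
  · filter_upwards [Ioo_mem_nhdsGT one_pos] with t ht
    have : 0 < 1 - log t := by linarith [log_neg ht.1 ht.2]
    exact mul_pos ht.1 (pow_pos this 2)

lemma le_mul_one_sub_log {t : ℝ} (h0 : 0 ≤ t) (h1 : t ≤ 1) : t ≤ t * (1 - log t) := by
  have := negMulLog_nonneg h0 h1
  rw [negMulLog] at this
  linarith

lemma inv_mul_one_sub_log_sq_le {y t : ℝ} (hy : y < 1) (ht : 0 < t)
    (hyt : 1 - y = t * (1 - log t)) : (t * (1 - log t) ^ 2)⁻¹ ≤ t / (1 - √y) ^ 2 := by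
  have hsqrt : 0 < 1 - √y := sub_pos.2 ((sqrt_lt' one_pos).2 (by linarith))
  have hsqrt_le : 1 - √y ≤ t * (1 - log t) :=
    hyt ▸ sub_le_sub_left (le_sqrt_self_iff.2 hy.le) 1
  calc (t * (1 - log t) ^ 2)⁻¹ = t / (t * (1 - log t)) ^ 2 := by field_simp
    _ ≤ t / (1 - √y) ^ 2 := by gcongr

theorem stmt_15 (φ α : ℝ → ℝ) (hφ : ∀ x, φ x = x + (1 - x) * Real.log (1 - x))
    (hα : ∀ y ∈ Set.Ico (0:ℝ) 1, α y ∈ Set.Ico (0:ℝ) 1 ∧ φ (α y) = y) :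
    Filter.Tendsto (fun y => (1 - α y) / (1 - Real.sqrt y) ^ 2)
      (nhdsWithin 1 (Set.Iio 1)) Filter.atTop := by
  have hrel : ∀ y ∈ Ico (0:ℝ) 1, 1 - y = (1 - α y) * (1 - log (1 - α y)) := by
    intro y hy
    have hφα := (hα y hy).2
    rw [hφ] at hφα
    linear_combination hφα
  have hpos : ∀ y ∈ Ico (0:ℝ) 1, 0 < 1 - α y := fun y hy => sub_pos.2 (hα y hy).1.2
  have hle : ∀ y ∈ Ico (0:ℝ) 1, 1 - α y ≤ 1 - y := fun y hy =>
    hrel y hy ▸ le_mul_one_sub_log (hpos y hy).le (by linarith [(hα y hy).1.1])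
  have hmem : ∀ᶠ y in 𝓝[<] (1:ℝ), y ∈ Ico (0:ℝ) 1 := Ico_mem_nhdsLT one_pos
  have ht : Tendsto (fun y => 1 - α y) (𝓝[<] 1) (𝓝[>] 0) := by
    refine tendsto_nhdsWithin_iff.2 ⟨?_, hmem.mono hpos⟩
    have hlim : Tendsto (fun y : ℝ => 1 - y) (𝓝[<] 1) (𝓝 0) :=
      ((continuous_sub_left 1).tendsto' 1 0 (sub_self 1)).mono_left nhdsWithin_le_nhds
    exact tendsto_of_tendsto_of_tendsto_of_le_of_le' tendsto_const_nhds hlim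
      (hmem.mono fun y hy => (hpos y hy).le) (hmem.mono hle)
  refine tendsto_atTop_mono' _ ?_
    (tendsto_mul_one_sub_log_sq_nhdsGT_zero.inv_tendsto_nhdsGT_zero.comp ht)
  filter_upwards [hmem] with y hy
  exact inv_mul_one_sub_log_sq_le hy.2 (hpos y hy) (hrel y hy)
end
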